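/- Let l ≥ 5 be a prime and F a field such that the l-th cyclotomic polynomial Φ_l(X) is irreducible in F[x]. If f(x), g(x) ∈ F[x] are relatively prime polynomials with max(deg f(x), deg g(x)) = 1, then the polynomial Φ_l(f(x), g(x)) is irreducible in F[x]. -/

import Mathlib

open Polynomial

/-- The homogenized cyclotomic polynomial `Φ_l(f,g) = ∑_{j=0}^{l-1} f^j g^{l-1-j}`. -/
noncomputable def PhiH {F : Type*} [Field F] (l : ℕ) (f g : Polynomial F) : Polynomial F :=
  ∑ j ∈ Finset.range l, f ^ j * g ^ (l - 1 - j)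

/-!
Let `ζ` be the class of `X` in the field `K = F[X]/(Φ_l)`. It has degree `l - 1 ≥ 2` over `F`,
so `ζ ∉ F`, and for linear `f = aX + b`, `g = cX + d` the equation `f(α) = ζ g(α)` can be solved
for `α ∈ K`. Then `Φ_l(f, g)(α) = g(α)^(l-1) Φ_l(ζ) = 0`, and coprimality gives `g(α) ≠ 0`, so
`ζ = f(α)/g(α) ∈ F(α)`. Hence the minimal polynomial of `α` has degree at least
`l - 1 ≥ deg Φ_l(f, g)`, so it is an associate of `Φ_l(f, g)`.
-/

open IntermediateField

theorem Polynomial.natDegree_geom_sum_X {R : Type*} [Ring R] [Nontrivial R] (n : ℕ) :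
    (∑ i ∈ Finset.range n, (X : R[X]) ^ i).natDegree = n - 1 := by
  rcases Nat.eq_zero_or_pos n with rfl | hn
  · simp
  have h := congrArg natDegree (geom_sum_mul (X : R[X]) n)
  rw [← C_1, (monic_geom_sum_X hn.ne').natDegree_mul (monic_X_sub_C 1), natDegree_X_sub_C,
    natDegree_X_pow_sub_C] at h
  omega

theorem minpoly.natDegree_le_of_mem_adjoin_simple {F K : Type*} [Field F] [Field K] [Algebra F K]
    {α β : K} (hα : IsIntegral F α) (hβ : β ∈ F⟮α⟯) :
    (minpoly F β).natDegree ≤ (minpoly F α).natDegree := by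
  have := adjoin.finiteDimensional hα
  rw [← adjoin.finrank hα]
  convert minpoly.natDegree_le (A := F) (⟨β, hβ⟩ : F⟮α⟯) using 2
  exact (minpoly.algebraMap_eq (A := F) (algebraMap F⟮α⟯ K).injective ⟨β, hβ⟩)

section PhiH

variable {F : Type*} [Field F] {l : ℕ} {f g : F[X]}

theorem natDegree_PhiH_le {n : ℕ} (hf : f.natDegree ≤ n) (hg : g.natDegree ≤ n) :
    (PhiH l f g).natDegree ≤ (l - 1) * n := by
  refine natDegree_sum_le_of_forall_le _ _ fun j hj => natDegree_mul_le.trans ?_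
  have hjl : j + (l - 1 - j) = l - 1 := by have := Finset.mem_range.mp hj; omega
  calc (f ^ j).natDegree + (g ^ (l - 1 - j)).natDegree ≤ j * n + (l - 1 - j) * n :=
        add_le_add (natDegree_pow_le_of_le j hf) (natDegree_pow_le_of_le _ hg)
    _ = (l - 1) * n := by rw [← add_mul, hjl]

theorem PhiH_mul_sub : PhiH l f g * (f - g) = f ^ l - g ^ l := geom_sum₂_mul f g l

theorem PhiH_ne_zero (hl : l ≠ 0) (hfg : IsCoprime f g) (hunit : ¬(IsUnit f ∧ IsUnit g)) :
    PhiH l f g ≠ 0 := by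
  intro h
  have hpow : f ^ l = g ^ l := by
    rw [← sub_eq_zero, ← PhiH_mul_sub, h, zero_mul]
  exact hunit ⟨hfg.pow_right.isUnit_of_dvd' dvd_rfl (hpow ▸ dvd_pow_self f hl),
    hfg.symm.pow_right.isUnit_of_dvd' dvd_rfl (hpow ▸ dvd_pow_self g hl)⟩

theorem aeval_PhiH_of_aeval_eq_mul {K : Type*} [CommRing K] [Algebra F K] {α ζ : K}
    (h : aeval α f = ζ * aeval α g) :
    aeval α (PhiH l f g) = aeval α g ^ (l - 1) * ∑ i ∈ Finset.range l, ζ ^ i := by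
  rw [PhiH, map_sum, Finset.mul_sum]
  refine Finset.sum_congr rfl fun j hj => ?_
  have hjl : j + (l - 1 - j) = l - 1 := by have := Finset.mem_range.mp hj; omega
  rw [map_mul, map_pow, map_pow, h, mul_pow, mul_assoc, ← pow_add, hjl, mul_comm]

end PhiH

theorem aeval_div_aeval_mem_adjoin_simple {F K : Type*} [Field F] [Field K] [Algebra F K]
    (f g : F[X]) (α : K) : aeval α f / aeval α g ∈ F⟮α⟯ :=
  div_mem (algebra_adjoin_le_adjoin F {α} (aeval_mem_adjoin_singleton F α))
    (algebra_adjoin_le_adjoin F {α} (aeval_mem_adjoin_singleton F α))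

theorem exists_aeval_eq_mul_aeval {F K : Type*} [Field F] [Field K] [Algebra F K] {ζ : K}
    (hζ : ζ ∉ (algebraMap F K).range) {f g : F[X]} (hdeg : max f.natDegree g.natDegree = 1) :
    ∃ α : K, aeval α f = ζ * aeval α g := by
  obtain ⟨a, b, rfl⟩ : ∃ a b, f = C a * X + C b :=
    ⟨_, _, eq_X_add_C_of_natDegree_le_one (le_of_max_le_left hdeg.le)⟩
  obtain ⟨c, d, rfl⟩ : ∃ c d, g = C c * X + C d :=
    ⟨_, _, eq_X_add_C_of_natDegree_le_one (le_of_max_le_right hdeg.le)⟩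
  set φ := algebraMap F K
  have hden : φ a - φ c * ζ ≠ 0 := by
    intro h
    by_cases hc : c = 0
    · have ha : a = 0 := by simpa [φ, hc] using h
      simp [ha, hc] at hdeg
    · exact hζ ⟨a / c, by
        rw [map_div₀, div_eq_iff (by simpa [φ] using hc)]; linear_combination h⟩
  refine ⟨(φ d * ζ - φ b) / (φ a - φ c * ζ), ?_⟩
  have hα := mul_div_cancel₀ (φ d * ζ - φ b) hden
  simp only [map_add, map_mul, aeval_X, aeval_C]
  linear_combination hα

theorem irreducible_PhiH_of_degree_one_general {F : Type*} [Field F] (l : ℕ) (hl5 : 5 ≤ l)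
    (hirr : Irreducible (∑ i ∈ Finset.range l, (X : Polynomial F) ^ i))
    (f g : Polynomial F) (hfg : IsCoprime f g)
    (hdeg : max f.natDegree g.natDegree = 1) :
    Irreducible (PhiH l f g) := by
  set Φ := ∑ i ∈ Finset.range l, (X : F[X]) ^ i
  have := Fact.mk hirr
  have := (AdjoinRoot.powerBasis hirr.ne_zero).finite
  set ζ := AdjoinRoot.root Φ
  have hζ : minpoly F ζ = Φ :=
    AdjoinRoot.minpoly_powerBasis_gen_of_monic (monic_geom_sum_X (by omega))
  have hζroot : ∑ i ∈ Finset.range l, ζ ^ i = 0 := by simpa [hζ, Φ] using minpoly.aeval F ζ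
  obtain ⟨α, hfα⟩ := exists_aeval_eq_mul_aeval (ζ := ζ)
    (by rw [← minpoly.natDegree_eq_one_iff, hζ, natDegree_geom_sum_X]; omega) hdeg
  have hα : IsIntegral F α := .of_finite F α
  have hgα : aeval α g ≠ 0 := fun hg =>
    (aeval_ne_zero_of_isCoprime hfg α).elim (· (by rw [hfα, hg, mul_zero])) (· hg)
  have hroot : aeval α (PhiH l f g) = 0 := by
    rw [aeval_PhiH_of_aeval_eq_mul hfα, hζroot, mul_zero]
  have hdegle : (PhiH l f g).natDegree ≤ (minpoly F α).natDegree :=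
    calc (PhiH l f g).natDegree ≤ (l - 1) * 1 :=
          natDegree_PhiH_le (le_of_max_le_left hdeg.le) (le_of_max_le_right hdeg.le)
      _ = (minpoly F ζ).natDegree := by rw [mul_one, hζ, natDegree_geom_sum_X]
      _ ≤ (minpoly F α).natDegree := by
        refine minpoly.natDegree_le_of_mem_adjoin_simple hα ?_
        rw [← mul_div_cancel_right₀ ζ hgα, ← hfα]
        exact aeval_div_aeval_mem_adjoin_simple f g α
  have hunit : ¬(IsUnit f ∧ IsUnit g) := fun ⟨hf, hg⟩ => by
    simp [natDegree_eq_zero_of_isUnit hf, natDegree_eq_zero_of_isUnit hg] at hdeg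
  exact (associated_of_dvd_of_natDegree_le (minpoly.dvd F α hroot)
    (PhiH_ne_zero (by omega) hfg hunit) hdegle).irreducible (minpoly.irreducible hα)

theorem irreducible_PhiH_of_degree_one {F : Type*} [Field F] (l : ℕ) (hl : l.Prime) (hl5 : 5 ≤ l)
    (hirr : Irreducible (∑ i ∈ Finset.range l, (X : Polynomial F) ^ i))
    (f g : Polynomial F) (hfg : IsCoprime f g)
    (hdeg : max f.natDegree g.natDegree = 1) :
    Irreducible (PhiH l f g) :=
  irreducible_PhiH_of_degree_one_general l hl5 hirr f g hfg hdeg
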